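/- arXiv:1901.02762 — 3 statements merged into one kernel-verified Lean document; each statement's English description precedes it below -/
import Mathlib

section
/- Let (Λ, σ) be a measure space, f, g : Λ → [0,∞) measurable, and α, β > 0. Then ∫_Λ f(τ)^α · g(τ)^β dσ(τ) = α·β·∫_0^∞ ∫_0^∞ x^(α−1) y^(β−1) σ({τ : f(τ) > x and g(τ) > y}) dx dy. -/
open MeasureTheory Set

theorem stmt1 {Λ : Type*} [MeasurableSpace Λ] (σ : Measure Λ) [SigmaFinite σ]
    (f g : Λ → ℝ) (hf : Measurable f) (hg : Measurable g)
    (hf0 : ∀ τ, 0 ≤ f τ) (hg0 : ∀ τ, 0 ≤ g τ)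
    (α β : ℝ) (hα : 0 < α) (hβ : 0 < β) :
    ∫⁻ τ, ENNReal.ofReal (f τ ^ α * g τ ^ β) ∂σ =
      ENNReal.ofReal (α * β) *
        ∫⁻ x in Set.Ioi (0:ℝ), ∫⁻ y in Set.Ioi (0:ℝ),
          ENNReal.ofReal (x ^ (α - 1) * y ^ (β - 1)) * σ {τ | x < f τ ∧ y < g τ} := by
  have hgm : Measurable fun τ => ENNReal.ofReal (g τ ^ β) :=
    (hg.pow_const β).ennreal_ofReal
  set μ : Measure Λ := σ.withDensity fun τ => ENNReal.ofReal (g τ ^ β) with hμ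
  have h1 : ∫⁻ τ, ENNReal.ofReal (f τ ^ α * g τ ^ β) ∂σ
      = ∫⁻ τ, ENNReal.ofReal (f τ ^ α) ∂μ := by
    rw [hμ, lintegral_withDensity_eq_lintegral_mul σ hgm ((hf.pow_const α).ennreal_ofReal)]
    refine lintegral_congr fun τ => ?_
    simp only [Pi.mul_apply]
    rw [mul_comm (f τ ^ α), ENNReal.ofReal_mul (Real.rpow_nonneg (hg0 τ) _)]
  have h2 := lintegral_rpow_eq_lintegral_meas_lt_mul μ (ae_of_all _ hf0) hf.aemeasurable hα
  have h3 : ∀ x : ℝ, μ {a | x < f a} =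
      ENNReal.ofReal β *
        ∫⁻ y in Ioi (0:ℝ), σ {τ | x < f τ ∧ y < g τ} * ENNReal.ofReal (y ^ (β - 1)) := by
    intro x
    rw [hμ, withDensity_apply _ (measurableSet_lt measurable_const hf)]
    rw [lintegral_rpow_eq_lintegral_meas_lt_mul (σ.restrict _) (ae_of_all _ hg0)
      hg.aemeasurable hβ]
    congr 1
    refine lintegral_congr fun y => ?_
    rw [Measure.restrict_apply (measurableSet_lt measurable_const hg)]
    have : {a | y < g a} ∩ {a | x < f a} = {τ | x < f τ ∧ y < g τ} := by
      ext τ; simp only [mem_inter_iff, mem_setOf_eq]; exact and_comm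
    rw [this]
  rw [h1, h2, ENNReal.ofReal_mul hα.le, mul_assoc]
  congr 1
  rw [← lintegral_const_mul' (ENNReal.ofReal β) _ ENNReal.ofReal_ne_top]
  refine lintegral_congr_ae ?_
  filter_upwards [ae_restrict_mem measurableSet_Ioi] with x hx
  rw [h3 x, mul_assoc]
  congr 1
  rw [← lintegral_mul_const' (ENNReal.ofReal (x ^ (α - 1))) _ ENNReal.ofReal_ne_top]
  refine lintegral_congr_ae ?_
  filter_upwards [ae_restrict_mem measurableSet_Ioi] with y hy
  rw [ENNReal.ofReal_mul (Real.rpow_nonneg (le_of_lt hx) _)]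
  ring
end

section
/- Let K ⊆ 𝕋 be compact, l ∈ (0,1), k = π/l + 1, and 0 < t < 1/k. Then for every λ in the connected component Ω_{kt}(K) containing 0 of the set {w ∈ 𝔻 : ρ_K(w) > kt}, the harmonic measure satisfies ω(λ, K_t; 𝔻) ≤ (l/t)·(1 − |λ|). -/
/-!
Points of `K_t` lie at distance at least `d = π t / l < 1` from `λ` because
`ρ_K(λ) > (π / l + 1) t`, and `π / d = l / t`. So it suffices to bound `ω(λ, A)` by
`(π / d) (1 - r)`, `r = |λ|`, for every measurable `A` at distance at least `d` from `λ`.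
The Poisson kernel is at most `(1 + r) / (1 - r)`, which settles `r ≤ 1/3`. Otherwise it is at
most `(1 - r²) / d²` on `A`, and at most `(1 - r²) π² / (4 r u²)` at angle `u` from `arg λ`
since `cos u ≤ 1 - 2 u² / π²`. Splitting the circle where these two bounds meet gives
`ω(λ, A) ≤ (1 - r²) / (√r d)`, and `1 + r ≤ π √r` when `r > 1/3`.
-/

open MeasureTheory Set

noncomputable def hMeasure (lam : ℂ) (A : Set ℂ) : ℝ :=
  (1 / (2 * Real.pi)) * ∫ θ in (0:ℝ)..(2 * Real.pi),
    Set.indicator A (fun _ => (1:ℝ)) (Complex.exp (θ * Complex.I)) *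
      ((1 - ‖lam‖ ^ 2) / ‖Complex.exp (θ * Complex.I) - lam‖ ^ 2)

open Real intervalIntegral

theorem integral_le_div_of_le_div_sq {f : ℝ → ℝ} {a b C : ℝ} (ha : 0 < a) (hab : a ≤ b)
    (hC : 0 ≤ C) (hf : IntervalIntegrable f volume a b)
    (hfC : ∀ u ∈ Icc a b, f u ≤ C / u ^ 2) :
    ∫ u in a..b, f u ≤ C / a := by
  have hpos : ∀ u ∈ uIcc a b, 0 < u := fun u hu =>
    ha.trans_le (by rw [uIcc_of_le hab] at hu; exact hu.1)
  have hderiv : ∀ u ∈ uIcc a b, HasDerivAt (fun u => -C * u⁻¹) (C / u ^ 2) u := fun u hu =>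
    ((hasDerivAt_inv (hpos u hu).ne').const_mul (-C)).congr_deriv (by ring)
  have hcont : ContinuousOn (fun u : ℝ => C / u ^ 2) (uIcc a b) :=
    continuousOn_const.div (continuousOn_pow 2) fun u hu => (pow_pos (hpos u hu) 2).ne'
  calc ∫ u in a..b, f u ≤ ∫ u in a..b, C / u ^ 2 :=
        integral_mono_on hab hf hcont.intervalIntegrable hfC
    _ = C / a - C / b := by
        rw [integral_eq_sub_of_hasDerivAt hderiv hcont.intervalIntegrable]; ring
    _ ≤ C / a := sub_le_self _ (div_nonneg hC (ha.le.trans hab))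

theorem integral_symm_le_of_le_of_le_div_sq {f : ℝ → ℝ} {a b M C : ℝ} (ha : 0 < a)
    (hab : a ≤ b) (hC : 0 ≤ C) (hf : ∀ x y, IntervalIntegrable f volume x y)
    (hfM : ∀ u ∈ Icc (-a) a, f u ≤ M)
    (hfC : ∀ u ∈ Icc (-b) b, a ≤ |u| → f u ≤ C / u ^ 2) :
    ∫ u in -b..b, f u ≤ 2 * a * M + 2 * (C / a) := by
  have hmid : ∫ u in -a..a, f u ≤ 2 * a * M := by
    calc ∫ u in -a..a, f u ≤ ∫ _ in -a..a, M :=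
          integral_mono_on (by linarith) (hf _ _) intervalIntegrable_const hfM
      _ = 2 * a * M := by rw [intervalIntegral.integral_const, smul_eq_mul]; ring
  have hright : ∫ u in a..b, f u ≤ C / a :=
    integral_le_div_of_le_div_sq ha hab hC (hf _ _) fun u hu =>
      hfC u ⟨by linarith [hu.1], hu.2⟩ (le_abs_self u |>.trans' hu.1)
  have hleft : ∫ u in -b..-a, f u ≤ C / a := by
    rw [← integral_comp_neg]
    refine integral_le_div_of_le_div_sq ha hab hC ?_ fun u hu => ?_
    · simpa using ((IntervalIntegrable.iff_comp_neg).mp (hf (-b) (-a))).symm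
    · rw [← neg_sq]
      exact hfC (-u) ⟨by linarith [hu.2], by linarith [hu.1]⟩
        (by rw [abs_neg]; exact hu.1.trans (le_abs_self u))
  rw [← integral_add_adjacent_intervals (hf (-b) (-a)) (hf (-a) b),
    ← integral_add_adjacent_intervals (hf (-a) a) (hf a b)]
  linarith

theorem sub_le_dist_of_lt_infDist {α : Type*} [PseudoMetricSpace α] {s : Set α} {x y : α}
    {a b : ℝ} (hx : a < Metric.infDist x s) (hy : Metric.infDist y s ≤ b) :
    a - b ≤ dist y x := by
  linarith [Metric.infDist_le_infDist_add_dist (x := x) (y := y) (s := s), dist_comm x y]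

section PoissonKernel

variable {w z : ℂ}

theorem poissonKernel_zero_of_norm_eq_one (hz : ‖z‖ = 1) :
    poissonKernel 0 w z = (1 - ‖w‖ ^ 2) / ‖z - w‖ ^ 2 := by
  simp [poissonKernel_def, hz]

theorem poissonKernel_zero_nonneg (hw : ‖w‖ ≤ 1) (hz : ‖z‖ = 1) :
    0 ≤ poissonKernel 0 w z := by
  rw [poissonKernel_zero_of_norm_eq_one hz]
  exact div_nonneg (by nlinarith [norm_nonneg w]) (sq_nonneg _)

theorem poissonKernel_zero_le_of_le_norm_sub {d : ℝ} (hw : ‖w‖ ≤ 1) (hz : ‖z‖ = 1)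
    (hd : 0 < d) (h : d ≤ ‖z - w‖) : poissonKernel 0 w z ≤ (1 - ‖w‖ ^ 2) / d ^ 2 := by
  rw [poissonKernel_zero_of_norm_eq_one hz]
  exact div_le_div_of_nonneg_left (by nlinarith [norm_nonneg w]) (by positivity)
    (pow_le_pow_left₀ hd.le h 2)

theorem poissonKernel_zero_le (hw : ‖w‖ < 1) (hz : ‖z‖ = 1) :
    poissonKernel 0 w z ≤ (1 + ‖w‖) / (1 - ‖w‖) := by
  have hw' : 0 < 1 - ‖w‖ := by linarith
  calc poissonKernel 0 w z ≤ (1 - ‖w‖ ^ 2) / (1 - ‖w‖) ^ 2 :=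
        poissonKernel_zero_le_of_le_norm_sub hw.le hz hw' (hz ▸ norm_sub_norm_le z w)
    _ = (1 + ‖w‖) / (1 - ‖w‖) := by field_simp; ring

theorem norm_exp_add_arg_mul_I_sub_sq (w : ℂ) (u : ℝ) :
    ‖Complex.exp (↑(u + w.arg) * Complex.I) - w‖ ^ 2 =
      1 - 2 * ‖w‖ * cos u + ‖w‖ ^ 2 := by
  have hre : w.re = ‖w‖ * cos w.arg := (Complex.norm_mul_cos_arg w).symm
  have him : w.im = ‖w‖ * sin w.arg := (Complex.norm_mul_sin_arg w).symm
  rw [Complex.sq_norm, Complex.normSq_apply, Complex.sub_re, Complex.sub_im,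
    Complex.exp_ofReal_mul_I_re, Complex.exp_ofReal_mul_I_im, hre, him, cos_add, sin_add]
  linear_combination (cos w.arg ^ 2 + sin w.arg ^ 2) * sin_sq_add_cos_sq u +
    (1 + ‖w‖ ^ 2 - 2 * ‖w‖ * cos u) * sin_sq_add_cos_sq w.arg

theorem poissonKernel_zero_exp_add_arg_le {u : ℝ} (hw : ‖w‖ ≤ 1) (hw0 : 0 < ‖w‖)
    (hu : |u| ≤ π) (hu0 : u ≠ 0) :
    poissonKernel 0 w (Complex.exp (↑(u + w.arg) * Complex.I)) ≤
      (1 - ‖w‖ ^ 2) * π ^ 2 / (4 * ‖w‖) / u ^ 2 := by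
  have hcos := mul_le_mul_of_nonneg_left (cos_le_one_sub_mul_cos_sq hu)
    (by positivity : (0 : ℝ) ≤ 2 * ‖w‖)
  have hlow :
      4 * ‖w‖ * u ^ 2 / π ^ 2 ≤ ‖Complex.exp (↑(u + w.arg) * Complex.I) - w‖ ^ 2 := by
    rw [norm_exp_add_arg_mul_I_sub_sq]
    have : 4 * ‖w‖ * u ^ 2 / π ^ 2 = 2 * ‖w‖ * (2 / π ^ 2 * u ^ 2) := by ring
    nlinarith [sq_nonneg (1 - ‖w‖)]
  rw [poissonKernel_zero_of_norm_eq_one (Complex.norm_exp_ofReal_mul_I _)]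
  calc (1 - ‖w‖ ^ 2) / ‖Complex.exp (↑(u + w.arg) * Complex.I) - w‖ ^ 2
      ≤ (1 - ‖w‖ ^ 2) / (4 * ‖w‖ * u ^ 2 / π ^ 2) :=
        div_le_div_of_nonneg_left (by nlinarith) (by positivity) hlow
    _ = (1 - ‖w‖ ^ 2) * π ^ 2 / (4 * ‖w‖) / u ^ 2 := by field_simp

end PoissonKernel

noncomputable def poissonIntegrand (lam : ℂ) (A : Set ℂ) (θ : ℝ) : ℝ :=
  A.indicator (fun _ => (1 : ℝ)) (Complex.exp (θ * Complex.I)) *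
    poissonKernel 0 lam (Complex.exp (θ * Complex.I))

section PoissonIntegrand

variable {lam : ℂ} {A : Set ℂ}

theorem poissonIntegrand_nonneg (hlam : ‖lam‖ ≤ 1) (θ : ℝ) :
    0 ≤ poissonIntegrand lam A θ :=
  mul_nonneg (Set.indicator_nonneg (fun _ _ => zero_le_one) _)
    (poissonKernel_zero_nonneg hlam (Complex.norm_exp_ofReal_mul_I θ))

theorem poissonIntegrand_le_poissonKernel (hlam : ‖lam‖ ≤ 1) (θ : ℝ) :
    poissonIntegrand lam A θ ≤ poissonKernel 0 lam (Complex.exp (θ * Complex.I)) := by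
  unfold poissonIntegrand
  by_cases h : Complex.exp (θ * Complex.I) ∈ A
  · simp [h]
  · simpa [h] using poissonKernel_zero_nonneg hlam (Complex.norm_exp_ofReal_mul_I θ)

theorem poissonIntegrand_le_of_forall_le_norm_sub {d : ℝ} (hlam : ‖lam‖ ≤ 1) (hd : 0 < d)
    (hA : ∀ ζ ∈ A, d ≤ ‖ζ - lam‖) (θ : ℝ) :
    poissonIntegrand lam A θ ≤ (1 - ‖lam‖ ^ 2) / d ^ 2 := by
  unfold poissonIntegrand
  by_cases h : Complex.exp (θ * Complex.I) ∈ A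
  · simpa [h] using poissonKernel_zero_le_of_le_norm_sub hlam
      (Complex.norm_exp_ofReal_mul_I θ) hd (hA _ h)
  · simpa [h] using div_nonneg (by nlinarith [norm_nonneg lam]) (sq_nonneg d)

variable (lam A) in
theorem poissonIntegrand_periodic : Function.Periodic (poissonIntegrand lam A) (2 * π) := by
  intro θ
  have h : Complex.exp (↑(θ + 2 * π) * Complex.I) = Complex.exp (↑θ * Complex.I) := by
    push_cast
    rw [add_mul, Complex.exp_add, Complex.exp_two_pi_mul_I, mul_one]
  simp only [poissonIntegrand, h]

theorem intervalIntegrable_poissonIntegrand (hlam : ‖lam‖ < 1) (hA : MeasurableSet A)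
    (a b : ℝ) : IntervalIntegrable (poissonIntegrand lam A) volume a b := by
  have hexp : Continuous fun θ : ℝ => Complex.exp (θ * Complex.I) := by fun_prop
  have hmeas : Measurable (poissonIntegrand lam A) := by
    refine ((measurable_const.indicator hA).comp hexp.measurable).mul ?_
    simp only [poissonKernel_def, sub_zero]
    fun_prop
  rw [intervalIntegrable_iff]
  refine Measure.integrableOn_of_bounded measure_Ioc_lt_top.ne hmeas.aestronglyMeasurable
    (M := (1 + ‖lam‖) / (1 - ‖lam‖)) (Filter.Eventually.of_forall fun θ => ?_)
  rw [Real.norm_eq_abs, abs_of_nonneg (poissonIntegrand_nonneg hlam.le θ)]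
  exact (poissonIntegrand_le_poissonKernel hlam.le θ).trans
    (poissonKernel_zero_le hlam (Complex.norm_exp_ofReal_mul_I θ))

theorem hMeasure_eq_integral_poissonIntegrand_add (lam : ℂ) (A : Set ℂ) (φ : ℝ) :
    hMeasure lam A = 1 / (2 * π) * ∫ u in -π..π, poissonIntegrand lam A (u + φ) := by
  have hper := (poissonIntegrand_periodic lam A).intervalIntegral_add_eq 0 (φ - π)
  rw [zero_add, show φ - π + 2 * π = π + φ by ring, ← neg_add_eq_sub] at hper
  rw [integral_comp_add_right, ← hper, hMeasure]
  congr 1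
  refine integral_congr fun θ _ => ?_
  rw [poissonIntegrand, poissonKernel_zero_of_norm_eq_one (Complex.norm_exp_ofReal_mul_I θ)]

end PoissonIntegrand

section HarmonicMeasure

variable {lam : ℂ} {A : Set ℂ}

theorem hMeasure_le (hlam : ‖lam‖ < 1) (hA : MeasurableSet A) :
    hMeasure lam A ≤ (1 + ‖lam‖) / (1 - ‖lam‖) := by
  have hbound : ∫ u in -π..π, poissonIntegrand lam A (u + 0) ≤
      ∫ _ in -π..π, (1 + ‖lam‖) / (1 - ‖lam‖) := by
    refine integral_mono_on (by linarith [pi_pos]) ?_ intervalIntegrable_const fun u _ => ?_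
    · simpa using intervalIntegrable_poissonIntegrand hlam hA (-π) π
    · exact (poissonIntegrand_le_poissonKernel hlam.le _).trans
        (poissonKernel_zero_le hlam (Complex.norm_exp_ofReal_mul_I _))
  rw [hMeasure_eq_integral_poissonIntegrand_add lam A 0]
  rw [intervalIntegral.integral_const, smul_eq_mul] at hbound
  calc 1 / (2 * π) * ∫ u in -π..π, poissonIntegrand lam A (u + 0)
      ≤ 1 / (2 * π) * ((π - -π) * ((1 + ‖lam‖) / (1 - ‖lam‖))) := by gcongr
    _ = (1 + ‖lam‖) / (1 - ‖lam‖) := by field_simp; ring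

theorem hMeasure_le_of_forall_le_norm_sub {d : ℝ} (hlam : ‖lam‖ < 1) (hA : MeasurableSet A)
    (hd : 0 < d) (hd2 : d ≤ 2 * √‖lam‖) (hfar : ∀ ζ ∈ A, d ≤ ‖ζ - lam‖) :
    hMeasure lam A ≤ (1 - ‖lam‖ ^ 2) / (√‖lam‖ * d) := by
  set r := ‖lam‖
  have hs : 0 < √r := by linarith
  have hr : 0 < r := sqrt_pos.mp hs
  have hsq : √r ^ 2 = r := sq_sqrt hr.le
  -- the angle at which `(1 - r²) / d²` and `(1 - r²) π² / (4 r u²)` agree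
  set a := π * d / (2 * √r)
  have ha : 0 < a := by positivity
  have haπ : a ≤ π := by
    rw [div_le_iff₀ (by positivity)]
    nlinarith [pi_pos]
  have hint : ∀ x y,
      IntervalIntegrable (fun u => poissonIntegrand lam A (u + lam.arg)) volume x y := fun x y => by
    simpa using (intervalIntegrable_poissonIntegrand hlam hA
      (x + lam.arg) (y + lam.arg)).comp_add_right lam.arg
  have hsplit := integral_symm_le_of_le_of_le_div_sq ha haπ
    (div_nonneg (mul_nonneg (by nlinarith) (sq_nonneg π)) (by positivity)) hint
    (fun u _ => poissonIntegrand_le_of_forall_le_norm_sub hlam.le hd hfar _)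
    (fun u hu hau => (poissonIntegrand_le_poissonKernel hlam.le _).trans
      (poissonKernel_zero_exp_add_arg_le hlam.le hr (abs_le.mpr hu)
        (by rintro rfl; simp at hau; linarith)))
  rw [hMeasure_eq_integral_poissonIntegrand_add lam A lam.arg]
  calc 1 / (2 * π) * ∫ u in -π..π, poissonIntegrand lam A (u + lam.arg)
      ≤ 1 / (2 * π) *
          (2 * a * ((1 - r ^ 2) / d ^ 2) + 2 * ((1 - r ^ 2) * π ^ 2 / (4 * r) / a)) := by
        gcongr
    _ = (1 - r ^ 2) / (√r * d) := by
        simp only [a]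
        field_simp
        rw [hsq]
        ring

theorem hMeasure_le_pi_div_mul {d : ℝ} (hlam : ‖lam‖ < 1) (hA : MeasurableSet A) (hd : 0 < d)
    (hd1 : d < 1) (hfar : ∀ ζ ∈ A, d ≤ ‖ζ - lam‖) :
    hMeasure lam A ≤ π / d * (1 - ‖lam‖) := by
  rcases le_or_gt ‖lam‖ (1 / 3) with hr | hr
  · calc hMeasure lam A ≤ (1 + ‖lam‖) / (1 - ‖lam‖) := hMeasure_le hlam hA
      _ ≤ 2 := by rw [div_le_iff₀ (by linarith)]; linarith
      _ ≤ π / d * (1 - ‖lam‖) := by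
        rw [div_mul_eq_mul_div, le_div_iff₀ hd]; nlinarith [pi_gt_three]
  · have hs : 1 / 2 < √‖lam‖ := by rw [lt_sqrt (by norm_num)]; linarith
    have hsq : √‖lam‖ ^ 2 = ‖lam‖ := sq_sqrt (norm_nonneg lam)
    have hkey : 1 + ‖lam‖ ≤ π * √‖lam‖ := by nlinarith [pi_gt_three]
    calc hMeasure lam A ≤ (1 - ‖lam‖ ^ 2) / (√‖lam‖ * d) :=
          hMeasure_le_of_forall_le_norm_sub hlam hA hd (by linarith) hfar
      _ = (1 - ‖lam‖) * (1 + ‖lam‖) / (π * √‖lam‖) * (π / d) := by field_simp; ring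
      _ ≤ (1 - ‖lam‖) * (π * √‖lam‖) / (π * √‖lam‖) * (π / d) := by gcongr
      _ = π / d * (1 - ‖lam‖) := by field_simp

end HarmonicMeasure

theorem stmt5_general (K : Set ℂ)
    (l : ℝ) (hl0 : 0 < l)
    (t : ℝ) (ht0 : 0 < t) (htk : t < 1 / (Real.pi / l + 1))
    (lam : ℂ)
    (hlam : lam ∈ connectedComponentIn
      {w ∈ Metric.ball (0:ℂ) 1 | (Real.pi / l + 1) * t < Metric.infDist w K} 0) :
    hMeasure lam {ζ ∈ Metric.sphere (0:ℂ) 1 | Metric.infDist ζ K ≤ t} ≤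
      (l / t) * (1 - ‖lam‖) := by
  obtain ⟨hball, hfarK⟩ := connectedComponentIn_subset _ _ hlam
  have hr : ‖lam‖ < 1 := by simpa using hball
  have hd1 : π * t / l < 1 := by
    have := (lt_div_iff₀ (by positivity)).mp htk
    linarith [show π * t / l = t * (π / l + 1) - t by ring]
  have hKt : MeasurableSet {ζ ∈ Metric.sphere (0:ℂ) 1 | Metric.infDist ζ K ≤ t} :=
    (Metric.isClosed_sphere.inter
      (isClosed_le (Metric.continuous_infDist_pt K) continuous_const)).measurableSet
  have hfar : ∀ ζ ∈ {ζ ∈ Metric.sphere (0:ℂ) 1 | Metric.infDist ζ K ≤ t},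
      π * t / l ≤ ‖ζ - lam‖ := by
    rintro ζ ⟨-, hζ⟩
    rw [← dist_eq_norm, show π * t / l = (π / l + 1) * t - t by ring]
    exact sub_le_dist_of_lt_infDist hfarK hζ
  convert hMeasure_le_pi_div_mul hr hKt (by positivity) hd1 hfar using 2
  field_simp

theorem stmt5 (K : Set ℂ) (hK : IsCompact K) (hKT : K ⊆ Metric.sphere (0:ℂ) 1)
    (l : ℝ) (hl0 : 0 < l) (hl1 : l < 1)
    (t : ℝ) (ht0 : 0 < t) (htk : t < 1 / (Real.pi / l + 1))
    (lam : ℂ)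
    (hlam : lam ∈ connectedComponentIn
      {w ∈ Metric.ball (0:ℂ) 1 | (Real.pi / l + 1) * t < Metric.infDist w K} 0) :
    hMeasure lam {ζ ∈ Metric.sphere (0:ℂ) 1 | Metric.infDist ζ K ≤ t} ≤
      (l / t) * (1 - ‖lam‖) :=
  stmt5_general K l hl0 t ht0 htk lam hlam
end

section
/- Let E, F ⊆ 𝕋 be compact and t, s > 0. Then D_{t,s}(E,F) := {w ∈ 𝔻 : ρ_E(w) > t and ρ_F(w) > s} is contained in Ω_{t/2, s/2}, the connected component containing the origin of {w ∈ 𝔻 : ρ_E(w) > t/2 and ρ_F(w) > s/2}. -/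
lemma key_half (K : Set ℂ) (hK : K ⊆ Metric.sphere (0:ℂ) 1) (hne : K.Nonempty)
    (z : ℂ) (hz : ‖z‖ ≤ 1) (r : ℝ) (hr0 : 0 ≤ r) (hr1 : r ≤ 1) :
    Metric.infDist z K ≤ 2 * Metric.infDist (r • z) K := by
  have h : Metric.infDist z K / 2 ≤ Metric.infDist (r • z) K := by
    conv_rhs => rw [Metric.infDist_eq_iInf]
    haveI := hne.to_subtype
    apply le_ciInf
    rintro ⟨y, hy⟩
    have h1 : Metric.infDist z K ≤ dist z y := Metric.infDist_le_dist_of_mem hy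
    have hy1 : ‖y‖ = 1 := by
      have := hK hy; simpa [mem_sphere_zero_iff_norm] using this
    have h2 : dist z (r • z) ≤ 1 - r := by
      have : z - r • z = (1 - r) • z := by
        simp [sub_smul]
      rw [dist_eq_norm, this, norm_smul, Real.norm_eq_abs, abs_of_nonneg (by linarith : (0:ℝ) ≤ 1 - r)]
      nlinarith [norm_nonneg z]
    have h3 : 1 - r ≤ dist (r • z) y := by
      have hn : ‖r • z‖ ≤ r := by
        rw [norm_smul, Real.norm_eq_abs, abs_of_nonneg hr0]
        nlinarith [norm_nonneg z]
      have := norm_sub_norm_le y (r • z)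
      rw [dist_comm, dist_eq_norm]
      linarith [hy1 ▸ this]
    have h4 : dist z y ≤ dist z (r • z) + dist (r • z) y := dist_triangle _ _ _
    linarith
  linarith
theorem stmt7 (E F : Set ℂ) (hE : IsCompact E) (hET : E ⊆ Metric.sphere (0:ℂ) 1)
    (hF : IsCompact F) (hFT : F ⊆ Metric.sphere (0:ℂ) 1)
    (t s : ℝ) (ht : 0 < t) (hs : 0 < s) :
    {w ∈ Metric.ball (0:ℂ) 1 | t < Metric.infDist w E ∧ s < Metric.infDist w F} ⊆
      connectedComponentIn
        {w ∈ Metric.ball (0:ℂ) 1 | t / 2 < Metric.infDist w E ∧ s / 2 < Metric.infDist w F} 0 := by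
  intro w hw
  obtain ⟨hwb, hwE, hwF⟩ := hw
  have hEne : E.Nonempty := by
    by_contra h
    rw [Set.not_nonempty_iff_eq_empty] at h
    rw [h, Metric.infDist_empty] at hwE
    linarith
  have hFne : F.Nonempty := by
    by_contra h
    rw [Set.not_nonempty_iff_eq_empty] at h
    rw [h, Metric.infDist_empty] at hwF
    linarith
  have hwn : ‖w‖ ≤ 1 := le_of_lt (by simpa [Metric.mem_ball] using hwb)
  have hseg : segment ℝ (0:ℂ) w ⊆
      {w ∈ Metric.ball (0:ℂ) 1 | t / 2 < Metric.infDist w E ∧ s / 2 < Metric.infDist w F} := by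
    rintro p hp
    obtain ⟨a, b, ha, hb, hab, rfl⟩ := hp
    have hb1 : b ≤ 1 := by linarith
    have hp' : a • (0:ℂ) + b • w = b • w := by simp
    rw [hp']
    refine ⟨?_, ?_, ?_⟩
    · rw [Metric.mem_ball, dist_zero_right, norm_smul, Real.norm_eq_abs,
        abs_of_nonneg hb]
      calc b * ‖w‖ ≤ 1 * ‖w‖ := by nlinarith [norm_nonneg w]
        _ < 1 := by simpa using (by simpa [Metric.mem_ball] using hwb : ‖w‖ < 1)
    · have := key_half E hET hEne w hwn b hb hb1
      linarith
    · have := key_half F hFT hFne w hwn b hb hb1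
      linarith
  have hconn : IsPreconnected (segment ℝ (0:ℂ) w) := (convex_segment (0:ℂ) w).isPreconnected
  have h0 : (0:ℂ) ∈ segment ℝ (0:ℂ) w := left_mem_segment ℝ 0 w
  have := hconn.subset_connectedComponentIn h0 hseg
  exact this (right_mem_segment ℝ 0 w)
end
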